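/- arXiv:2007.13901 — 2 statements merged into one kernel-verified Lean document; each statement's English description precedes it below -/
import Mathlib

section
/- If T is a strongly connected tournament of order n ≥ 5, then T has a closed dominating walk of length at most n - 2. -/
/-! Let `v` have maximum out-degree `d`. Every in-neighbour of `v` is beaten by some
out-neighbour of `v`, since otherwise its out-degree would exceed `d`. So if `w₁ → ⋯ → wₖ` is a
Hamiltonian path of the in-neighbourhood of `v` (Rédei) and `u` is an out-neighbour of `v`
beating `w₁`, the closed walk `v → u → w₁ → ⋯ → wₖ → v` contains `v` and its in-neighbours and
hence dominates; its length is `k + 2 = n + 1 - d ≤ n - 2` once `d ≥ 3`. If `d ≤ 2`, any three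
vertices dominate (an undominated vertex would beat all three), so the triangle `v → u → w₁ → v`
is a closed dominating walk of length `3 ≤ n - 2`. -/

variable {V : Type*}

/-- `S` dominates the digraph with arc relation `A`: every vertex is in `S`
or has an in-neighbour in `S`. -/
def Dom (A : V → V → Prop) (S : Set V) : Prop :=
  ∀ v, v ∈ S ∨ ∃ u ∈ S, A u v

/-- `l` (a nonempty list of visited vertices) is a closed directed walk:
consecutive vertices are joined by arcs and there is an arc from the last
vertex back to the first (or the walk is the trivial walk at one vertex). -/
def IsClosedWalk (A : V → V → Prop) (l : List V) : Prop :=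
  l ≠ [] ∧ l.Chain' A ∧
    (l.length = 1 ∨ ∀ a b, l.head? = some a → l.getLast? = some b → A b a)

/-- The length (number of arcs, with multiplicity) of the closed walk with
vertex list `l`. -/
def walkLength (l : List V) : ℕ := if l.length = 1 then 0 else l.length

/-- `l` is a closed dominating walk. -/
def IsCDW (A : V → V → Prop) (l : List V) : Prop :=
  IsClosedWalk A l ∧ Dom A {v | v ∈ l}

/-- The digraph has a closed dominating walk. -/
def HasCDW (A : V → V → Prop) : Prop := ∃ l, IsCDW A l

/-- The watchman number: minimum length of a closed dominating walk. -/
noncomputable def watchman (A : V → V → Prop) : ℕ :=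
  sInf {n | ∃ l, IsCDW A l ∧ walkLength l = n}

/-- A tournament: loopless, and exactly one arc between any two distinct vertices. -/
def IsTournament (A : V → V → Prop) : Prop :=
  (∀ v, ¬ A v v) ∧ ∀ u v : V, u ≠ v → (A u v ↔ ¬ A v u)

/-- The subdigraph induced on `S` is strongly connected. -/
def StronglyConnectedOn (A : V → V → Prop) (S : Set V) : Prop :=
  ∀ u ∈ S, ∀ v ∈ S, Relation.ReflTransGen (fun a b => a ∈ S ∧ b ∈ S ∧ A a b) u v

/-- The maximal strongly connected component containing `v`. -/
def StrongComp (A : V → V → Prop) (v : V) : Set V :=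
  {u | Relation.ReflTransGen A v u ∧ Relation.ReflTransGen A u v}

/-- The domination number. -/
noncomputable def domNum (A : V → V → Prop) : ℕ :=
  sInf {n | ∃ S : Set V, S.ncard = n ∧ Dom A S}

/-- The total domination number. -/
noncomputable def totalDomNum (A : V → V → Prop) : ℕ :=
  sInf {n | ∃ S : Set V, S.ncard = n ∧ ∀ v, ∃ u ∈ S, u ≠ v ∧ A u v}

/-- An orientation of a complete multipartite graph whose parts are the fibres
of `P`: arcs only between different parts, and exactly one arc between any two
vertices in different parts. -/
def IsCMPOrientation {ι : Type*} (A : V → V → Prop) (P : V → ι) : Prop :=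
  (∀ u v, A u v → P u ≠ P v) ∧ ∀ u v, P u ≠ P v → (A u v ↔ ¬ A v u)

namespace List

variable {α : Type*} {r : α → α → Prop} [DecidableRel r]

theorem isChain_cons_orderedInsert {a c : α} {l : List α} (hl : ∀ b ∈ l, r a b ∨ r b a)
    (hca : r c a) (hcl : (c :: l).IsChain r) : (c :: l.orderedInsert r a).IsChain r := by
  induction l generalizing c with
  | nil => exact isChain_pair.2 hca
  | cons b t ih =>
    rw [isChain_cons_cons] at hcl
    by_cases hab : r a b
    · rw [orderedInsert_cons_of_le _ _ hab]
      exact isChain_cons_cons.2 ⟨hca, isChain_cons_cons.2 ⟨hab, hcl.2⟩⟩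
    · rw [orderedInsert_of_not_le _ _ hab]
      exact isChain_cons_cons.2 ⟨hcl.1, ih (fun x hx => hl x (mem_cons_of_mem b hx))
        ((hl b mem_cons_self).resolve_left hab) hcl.2⟩

theorem isChain_orderedInsert {a : α} {l : List α} (hl : ∀ b ∈ l, r a b ∨ r b a)
    (hchain : l.IsChain r) : (l.orderedInsert r a).IsChain r := by
  cases l with
  | nil => exact isChain_singleton a
  | cons b t =>
    by_cases hab : r a b
    · rw [orderedInsert_cons_of_le _ _ hab]
      exact isChain_cons_cons.2 ⟨hab, hchain⟩
    · rw [orderedInsert_of_not_le _ _ hab]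
      exact isChain_cons_orderedInsert (fun x hx => hl x (mem_cons_of_mem b hx))
        ((hl b mem_cons_self).resolve_left hab) hchain

/-- Rédei's theorem: insertion sort finds a Hamiltonian path. -/
theorem isChain_insertionSort {l : List α} (hl : l.Pairwise fun a b => r a b ∨ r b a) :
    (l.insertionSort r).IsChain r := by
  induction l with
  | nil => exact isChain_nil
  | cons a t ih =>
    rw [pairwise_cons] at hl
    exact isChain_orderedInsert (fun b hb => hl.1 b ((mem_insertionSort r).1 hb)) (ih hl.2)

end List

theorem Dom.mono {A : V → V → Prop} {S T : Set V} (h : Dom A S) (hST : S ⊆ T) : Dom A T :=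
  fun v => (h v).imp (@hST v) fun ⟨u, hu, huv⟩ => ⟨u, hST hu, huv⟩

theorem walkLength_cons_cons (a b : V) (l : List V) : walkLength (a :: b :: l) = l.length + 2 := by
  simp [walkLength]

theorem isClosedWalk_cons_cons {A : V → V → Prop} {v u : V} {L : List V} (hvu : A v u)
    (huL : (u :: L).IsChain A) (hL : L ≠ []) (hLv : ∀ x ∈ L, A x v) :
    IsClosedWalk A (v :: u :: L) := by
  refine ⟨List.cons_ne_nil _ _, List.isChain_cons_cons.2 ⟨hvu, huL⟩, Or.inr fun a b ha hb => ?_⟩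
  rw [List.head?_cons, Option.some_inj] at ha
  have hb : b = L.getLast hL := by
    simpa [List.getLast?_cons, List.getLast?_eq_some_getLast hL] using hb.symm
  exact ha ▸ hb ▸ hLv _ (List.getLast_mem hL)

section Neighbours

variable [Fintype V] (A : V → V → Prop) [DecidableRel A]

def outNbrs (v : V) : Finset V := {u | A v u}

def inNbrs (v : V) : Finset V := {u | A u v}

@[simp] theorem mem_outNbrs {u v : V} : u ∈ outNbrs A v ↔ A v u := by simp [outNbrs]

@[simp] theorem mem_inNbrs {u v : V} : u ∈ inNbrs A v ↔ A u v := by simp [inNbrs]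

variable {A}

theorem card_le_card_outNbrs {x : V} {s : Finset V} (h : ∀ y ∈ s, A x y) :
    s.card ≤ (outNbrs A x).card :=
  Finset.card_le_card fun y hy => (mem_outNbrs A).2 (h y hy)

end Neighbours

namespace IsTournament

variable {A : V → V → Prop}

theorem ne_of_adj (hT : IsTournament A) {u v : V} (h : A u v) : u ≠ v :=
  fun huv => hT.1 u (huv ▸ h)

theorem asymm (hT : IsTournament A) {u v : V} (h : A u v) : ¬ A v u :=
  (hT.2 u v (hT.ne_of_adj h)).1 h

theorem adj_or_adj (hT : IsTournament A) {u v : V} (huv : u ≠ v) : A u v ∨ A v u :=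
  or_iff_not_imp_left.2 (hT.2 v u huv.symm).2

theorem dom_insert_inNbrs (hT : IsTournament A) (v : V) : Dom A {x | x = v ∨ A x v} := by
  intro x
  by_cases hxv : x = v
  · exact Or.inl (Or.inl hxv)
  · rcases hT.adj_or_adj hxv with h | h
    · exact Or.inl (Or.inr h)
    · exact Or.inr ⟨v, Or.inl rfl, h⟩

theorem exists_isChain_mem_iff (hT : IsTournament A) (s : Finset V) :
    ∃ l : List V, l.IsChain A ∧ (∀ y, y ∈ l ↔ y ∈ s) ∧ l.length = s.card := by
  classical
  exact ⟨s.toList.insertionSort A, List.isChain_insertionSort (s.nodup_toList.imp hT.adj_or_adj),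
    by simp, by simp⟩

theorem isCDW_of_path_inNbrs (hT : IsTournament A) {v u : V} {L : List V} (hvu : A v u)
    (huL : (u :: L).IsChain A) (hL : L ≠ []) (hLv : ∀ y, y ∈ L ↔ A y v) :
    IsCDW A (v :: u :: L) := by
  refine ⟨isClosedWalk_cons_cons hvu huL hL fun y hy => (hLv y).1 hy,
    (hT.dom_insert_inNbrs v).mono ?_⟩
  rintro y (rfl | hyv)
  exacts [List.mem_cons_self, List.mem_cons_of_mem _ (List.mem_cons_of_mem _ ((hLv y).2 hyv))]

variable [Fintype V] [DecidableRel A]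

theorem card_outNbrs_add_card_inNbrs (hT : IsTournament A) (v : V) :
    (outNbrs A v).card + (inNbrs A v).card + 1 = Fintype.card V := by
  classical
  have hnot : Finset.univ.filter (fun u => ¬ A v u) = insert v (inNbrs A v) := by
    ext u
    by_cases huv : u = v
    · simp [huv, hT.1 v]
    · simp [huv, (hT.2 u v huv).symm]
  have hsplit := Finset.card_filter_add_card_filter_not (s := Finset.univ) fun u => A v u
  rw [hnot, Finset.card_insert_of_notMem (by simp [hT.1 v]), Finset.card_univ] at hsplit
  exact (Nat.add_assoc _ _ _).trans hsplit

/-- Otherwise `x` would beat `v` and all out-neighbours of `v`, exceeding the maximum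
out-degree. -/
theorem exists_adj_adj_of_adj (hT : IsTournament A)
    {v x : V} (hmax : ∀ y, (outNbrs A y).card ≤ (outNbrs A v).card) (hxv : A x v) :
    ∃ u, A v u ∧ A u x := by
  classical
  by_contra! h
  have hbeats : ∀ y ∈ insert v (outNbrs A v), A x y := by
    intro y hy
    rcases Finset.mem_insert.1 hy with rfl | hvy
    · exact hxv
    · have hvy := (mem_outNbrs A).1 hvy
      have hxy : x ≠ y := fun hxy => hT.asymm hvy (hxy ▸ hxv)
      exact (hT.adj_or_adj hxy).resolve_right (h y hvy)
  have := card_le_card_outNbrs hbeats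
  rw [Finset.card_insert_of_notMem (by simp [hT.1 v])] at this
  exact absurd (hmax x) (by omega)

theorem dom_of_card_outNbrs_lt (hT : IsTournament A) (s : Finset V)
    (h : ∀ x, (outNbrs A x).card < s.card) : Dom A s := by
  intro x
  by_contra! hx
  have hbeats : ∀ y ∈ s, A x y := fun y hy =>
    (hT.adj_or_adj fun (hxy : x = y) => hx.1 (Finset.mem_coe.2 (hxy ▸ hy))).resolve_right
      (hx.2 y hy)
  exact absurd (card_le_card_outNbrs hbeats) (h x).not_ge

theorem isCDW_triangle (hT : IsTournament A) {v u w : V} (hvu : A v u) (huw : A u w)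
    (hwv : A w v) (hdeg : ∀ y, (outNbrs A y).card ≤ 2) : IsCDW A [v, u, w] := by
  classical
  have hcard : ({v, u, w} : Finset V).card = 3 := Finset.card_eq_three.2
    ⟨v, u, w, hT.ne_of_adj hvu, (hT.ne_of_adj hwv).symm, hT.ne_of_adj huw, rfl⟩
  refine ⟨isClosedWalk_cons_cons hvu (List.isChain_pair.2 huw) (List.cons_ne_nil _ _)
    (by simpa using hwv), (hT.dom_of_card_outNbrs_lt {v, u, w} ?_).mono (by intro y; simp)⟩
  exact fun y => hcard ▸ Nat.lt_succ_of_le (hdeg y)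

end IsTournament

theorem stmt7 [Fintype V] (A : V → V → Prop) (hT : IsTournament A)
    (hn : 5 ≤ Fintype.card V) (hs : ∀ u v : V, Relation.ReflTransGen A u v) :
    ∃ l, IsCDW A l ∧ walkLength l ≤ Fintype.card V - 2 := by
  classical
  have : Nonempty V := Fintype.card_pos_iff.1 (by omega)
  obtain ⟨v, hmax⟩ := Finite.exists_max fun x => (outNbrs A x).card
  obtain ⟨x, hxv⟩ := Fintype.exists_ne_of_one_lt_card (by omega) v
  obtain ⟨w₀, hw₀v⟩ : ∃ w, A w v := by
    rcases (hs x v).cases_tail with h | ⟨w, -, hwv⟩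
    exacts [absurd h.symm hxv, ⟨w, hwv⟩]
  obtain ⟨_ | ⟨w, L⟩, hpath, hmem, hlen⟩ := hT.exists_isChain_mem_iff (inNbrs A v)
  · exact absurd hw₀v (by simpa using hmem w₀)
  simp only [mem_inNbrs] at hmem
  obtain ⟨u, hvu, huw⟩ := hT.exists_adj_adj_of_adj hmax ((hmem w).1 List.mem_cons_self)
  by_cases hdeg : 3 ≤ (outNbrs A v).card
  · refine ⟨v :: u :: w :: L, hT.isCDW_of_path_inNbrs hvu
      (List.isChain_cons_cons.2 ⟨huw, hpath⟩) (List.cons_ne_nil _ _) hmem, ?_⟩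
    have := hT.card_outNbrs_add_card_inNbrs v
    rw [walkLength_cons_cons, hlen]
    omega
  · refine ⟨[v, u, w], hT.isCDW_triangle hvu huw ((hmem w).1 List.mem_cons_self)
      fun y => by have := hmax y; omega, ?_⟩
    rw [walkLength_cons_cons, List.length_singleton]
    omega
end

section
/- For a tournament T with γ(T) > 1, w(T) = γ(T) if and only if there exists a minimum dominating set D of T such that the subtournament induced by D is strongly connected. -/
variable {V : Type*}

/-! A closed dominating walk of length `γ(T) > 1` visits at most `γ(T)` vertices, which dominate,
so it visits exactly `γ(T)` distinct ones and they form a minimum dominating set, strongly connected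
along the walk. Conversely, a strongly connected minimum dominating set `D` carries a Hamilton cycle
(Camion's theorem), a closed dominating walk of length `|D| = γ(T)`; no closed dominating walk is
shorter, since its vertices dominate and, as `γ(T) > 1`, it is not the trivial walk.

Camion's theorem comes from the longest-cycle argument: a vertex off a longest cycle `C` has no
in-neighbour and out-neighbour on `C` at once, no arc goes from a vertex dominated by `C` to a vertex
dominating `C`, and strong connectivity then leaves no vertex off `C`. -/

open List Relation

theorem IsTournament.asymm_s15 {A : V → V → Prop} (hT : IsTournament A) {u v : V} (h : A u v) :
    ¬ A v u := by
  rcases eq_or_ne u v with rfl | huv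
  · exact hT.1 u
  · exact (hT.2 u v huv).mp h

theorem IsTournament.rel_of_not_rel {A : V → V → Prop} (hT : IsTournament A) {u v : V}
    (huv : u ≠ v) (h : ¬ A u v) : A v u :=
  (hT.2 v u huv.symm).mpr h

theorem IsTournament.comap {W : Type*} {A : V → V → Prop} (hT : IsTournament A) {f : W → V}
    (hf : Function.Injective f) : IsTournament (fun a b => A (f a) (f b)) :=
  ⟨fun v => hT.1 (f v), fun _ _ huv => hT.2 _ _ (hf.ne huv)⟩

theorem List.exists_eq_append_cons_cons_not_and {α : Type*} {p : α → Prop} {a : α} {l : List α}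
    (ha : ¬ p a) (hl : ∃ y ∈ l, p y) :
    ∃ s x y t, a :: l = s ++ x :: y :: t ∧ ¬ p x ∧ p y := by
  by_contra! h
  have hchain : IsChain (fun x y => ¬ p x → ¬ p y) (a :: l) :=
    isChain_iff_forall_rel_of_append_cons_cons.mpr fun _ _ _ _ heq => h _ _ _ _ heq
  obtain ⟨y, hy, hpy⟩ := hl
  exact hchain.cons_induction (fun x => ¬ p x) l (fun _ _ hxy => hxy) ha y hy hpy

theorem Relation.ReflTransGen.mem_of_forall_mem_imp {α : Type*} {r : α → α → Prop} {X : Set α}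
    (hX : ∀ a b, r a b → a ∈ X → b ∈ X) {a b : α} (h : ReflTransGen r a b) (ha : a ∈ X) :
    b ∈ X := by
  induction h with
  | refl => exact ha
  | tail _ hbc ih => exact hX _ _ hbc ih

theorem List.ncard_setOf_mem_le_length {α : Type*} (l : List α) :
    {a | a ∈ l}.ncard ≤ l.length := by
  classical
  rw [← coe_toFinset, Set.ncard_coe_finset]
  exact toFinset_card_le l

theorem List.Nodup.ncard_setOf_mem {α : Type*} {l : List α} (h : l.Nodup) :
    {a | a ∈ l}.ncard = l.length := by
  classical
  rw [← coe_toFinset, Set.ncard_coe_finset, toFinset_card_of_nodup h]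

section ClosedWalk

variable {B : V → V → Prop} {l s t : List V}

theorem isClosedWalk_iff : IsClosedWalk B l ↔ l ≠ [] ∧ IsChain B l ∧
    (l.length = 1 ∨ ∀ x ∈ l.getLast?, ∀ y ∈ l.head?, B x y) :=
  and_congr_right fun _ => and_congr_right fun _ => or_congr_right
    ⟨fun h x hx y hy => h y x hy hx, fun h y x hy hx => h x hx y hy⟩

theorem isClosedWalk_append_iff (hs : s ≠ []) (ht : t ≠ []) :
    IsClosedWalk B (s ++ t) ↔ IsChain B s ∧ IsChain B t ∧
      (∀ x ∈ s.getLast?, ∀ y ∈ t.head?, B x y) ∧ (∀ x ∈ t.getLast?, ∀ y ∈ s.head?, B x y) := by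
  have hlen : s.length + t.length ≠ 1 := by
    have := length_pos_iff.mpr hs; have := length_pos_iff.mpr ht
    omega
  simp [isClosedWalk_iff, hs, isChain_append, hlen, head?_append_of_ne_nil _ hs,
    getLast?_append_of_ne_nil _ ht, and_assoc]

theorem IsClosedWalk.append_comm (h : IsClosedWalk B (s ++ t)) : IsClosedWalk B (t ++ s) := by
  rcases eq_or_ne s [] with rfl | hs
  · simpa using h
  rcases eq_or_ne t [] with rfl | ht
  · simpa using h
  obtain ⟨h₁, h₂, h₃, h₄⟩ := (isClosedWalk_append_iff hs ht).mp h
  exact (isClosedWalk_append_iff ht hs).mpr ⟨h₂, h₁, h₄, h₃⟩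

theorem IsClosedWalk.append (hl : IsClosedWalk B l) (ht : t ≠ []) (hct : IsChain B t)
    (h₁ : ∀ x ∈ l.getLast?, ∀ y ∈ t.head?, B x y) (h₂ : ∀ x ∈ t.getLast?, ∀ y ∈ l.head?, B x y) :
    IsClosedWalk B (l ++ t) :=
  (isClosedWalk_append_iff hl.1 ht).mpr ⟨hl.2.1, hct, h₁, h₂⟩

theorem IsClosedWalk.exists_perm_cons (hl : IsClosedWalk B l) {x : V} (hx : x ∈ l) :
    ∃ t, IsClosedWalk B (x :: t) ∧ (x :: t).Perm l := by
  obtain ⟨s, t, rfl⟩ := append_of_mem hx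
  exact ⟨t ++ s, hl.append_comm, perm_append_comm (l₁ := x :: t)⟩

theorem IsClosedWalk.map {W : Type*} {C : W → W → Prop} (hl : IsClosedWalk B l) {f : V → W}
    (hf : ∀ a b, B a b → C (f a) (f b)) : IsClosedWalk C (l.map f) := by
  obtain ⟨hne, hch, hwrap⟩ := hl
  refine ⟨by simpa using hne, isChain_map_of_isChain f hf hch, ?_⟩
  rcases hwrap with h | h
  · exact Or.inl (by simpa using h)
  · right
    intro a b ha hb
    simp only [head?_map, getLast?_map, Option.map_eq_some_iff] at ha hb
    obtain ⟨a, ha, rfl⟩ := ha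
    obtain ⟨b, hb, rfl⟩ := hb
    exact hf _ _ (h a b ha hb)

theorem IsClosedWalk.stronglyConnectedOn (hl : IsClosedWalk B l) :
    StronglyConnectedOn B {v | v ∈ l} := by
  intro u hu v hv
  obtain ⟨t, ht, hperm⟩ := hl.exists_perm_cons hu
  have hch : IsChain (fun a b => a ∈ l ∧ b ∈ l ∧ B a b) (u :: t) :=
    (IsChain.iff_mem.mp ht.2.1).imp fun a b h => ⟨hperm.subset h.1, hperm.subset h.2.1, h.2.2⟩
  exact hch.induction (ReflTransGen _ u) _ (fun _ _ hab hua => hua.tail hab)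
    (fun _ => ReflTransGen.refl) v (hperm.symm.subset hv)

end ClosedWalk

section Tournament

variable {B : V → V → Prop} {l : List V}

theorem IsClosedWalk.exists_perm_cons_of_not_rel_of_rel (hT : IsTournament B)
    (hl : IsClosedWalk B l) {w x y : V} (hw : w ∉ l) (hx : x ∈ l) (hwx : ¬ B w x) (hy : y ∈ l)
    (hwy : B w y) : ∃ l', IsClosedWalk B l' ∧ l'.Perm (w :: l) := by
  -- Rotate the walk to start at `x`, find where `B w ·` switches on along it, rotate that switch
  -- to the wrap-around and append `w` there.
  obtain ⟨t, ht, hperm⟩ := hl.exists_perm_cons hx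
  have hyt : y ∈ t := mem_of_ne_of_mem (by rintro rfl; exact hwx hwy) (hperm.symm.subset hy)
  obtain ⟨P, x', y', Q, heq, hwx', hwy'⟩ :=
    exists_eq_append_cons_cons_not_and (p := (B w ·)) hwx ⟨y, hyt, hwy⟩
  have hx'l : x' ∈ l := hperm.subset (heq ▸ by simp)
  rw [heq, show P ++ x' :: y' :: Q = (P ++ [x']) ++ y' :: Q by simp] at ht hperm
  refine ⟨(y' :: Q ++ (P ++ [x'])) ++ [w], ht.append_comm.append (by simp) (.singleton w) ?_ ?_, ?_⟩
  · rw [← append_assoc, getLast?_concat]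
    simpa using hT.rel_of_not_rel (by rintro rfl; exact hw hx'l) hwx'
  · simpa using hwy'
  · exact (perm_append_singleton _ _).trans ((perm_append_comm.trans hperm).cons w)

theorem IsTournament.forall_mem_of_no_insertion (hT : IsTournament B)
    (hS : ∀ u v, ReflTransGen B u v) {C : Set V} (hC : C.Nonempty)
    (hins : ∀ w ∉ C, ∀ x ∈ C, ∀ y ∈ C, B w y → B w x)
    (hrs : ∀ r ∉ C, ∀ s ∉ C, (∀ c ∈ C, B c r) → (∀ c ∈ C, B s c) → ¬ B r s) (v : V) : v ∈ C := by
  obtain ⟨c₀, hc₀⟩ := hC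
  -- `C` together with the vertices sending no arc into `C` is closed under successors, so it is
  -- everything; then `Cᶜ` is closed under successors too, so it is empty.
  have hX : ∀ a b, B a b → a ∈ {v | v ∈ C ∨ ∀ c ∈ C, ¬ B v c} →
      b ∈ {v | v ∈ C ∨ ∀ c ∈ C, ¬ B v c} := by
    intro a b hab ha
    simp only [Set.mem_ofPred_eq] at ha ⊢
    by_contra! hb
    obtain ⟨hbC, c, hc, hbc⟩ := hb
    have hbS : ∀ x ∈ C, B b x := fun x hx => hins b hbC x hx c hc hbc
    by_cases haC : a ∈ C
    · exact hT.asymm_s15 hab (hbS a haC)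
    · have haR : ∀ c ∈ C, B c a := fun c hc =>
        hT.rel_of_not_rel (by rintro rfl; exact haC hc) (ha.resolve_left haC c hc)
      exact hrs a haC b hbC haR hbS hab
  have hout : ∀ w ∉ C, ∀ c ∈ C, ¬ B w c := fun w hw =>
    ((hS c₀ w).mem_of_forall_mem_imp hX (Or.inl hc₀)).resolve_left hw
  by_contra hv
  exact (hS v c₀).mem_of_forall_mem_imp (X := Cᶜ)
    (fun a b hab ha hb => hout a ha b hb hab) hv hc₀

theorem IsClosedWalk.exists_longer (hT : IsTournament B) (hS : ∀ u v, ReflTransGen B u v)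
    (hl : IsClosedWalk B l) (hnd : l.Nodup) {w : V} (hw : w ∉ l) :
    ∃ l', IsClosedWalk B l' ∧ l'.Nodup ∧ l.length < l'.length := by
  by_cases hins : ∃ v ∉ l, ∃ x ∈ l, ∃ y ∈ l, B v y ∧ ¬ B v x
  · obtain ⟨v, hv, x, hx, y, hy, hvy, hvx⟩ := hins
    obtain ⟨l', hl', hperm⟩ := hl.exists_perm_cons_of_not_rel_of_rel hT hv hx hvx hy hvy
    exact ⟨l', hl', hperm.nodup_iff.mpr (nodup_cons.mpr ⟨hv, hnd⟩), by simp [hperm.length_eq]⟩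
  by_cases hrs : ∃ r ∉ l, ∃ s ∉ l, (∀ c ∈ l, B c r) ∧ (∀ c ∈ l, B s c) ∧ B r s
  · obtain ⟨r, hr, s, hs, hcr, hsc, hrs⟩ := hrs
    have hrs' : r ≠ s := by rintro rfl; exact hT.1 r hrs
    refine ⟨l ++ [r, s], hl.append (by simp) (isChain_pair.mpr hrs) ?_ ?_, ?_, by simp⟩
    · simpa using fun x hx => hcr x (mem_of_getLast? hx)
    · simpa using fun y hy => hsc y (mem_of_mem_head? hy)
    · simpa [nodup_append, hnd, hrs'] using
        fun a ha => ⟨ne_of_mem_of_not_mem ha hr, ne_of_mem_of_not_mem ha hs⟩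
  push Not at hins hrs
  exact absurd (hT.forall_mem_of_no_insertion hS (C := {v | v ∈ l}) ⟨_, head_mem hl.1⟩ hins hrs w) hw

theorem IsTournament.exists_hamiltonian_cycle [Finite V] [Nonempty V] (hT : IsTournament B)
    (hS : ∀ u v, ReflTransGen B u v) : ∃ l, IsClosedWalk B l ∧ l.Nodup ∧ ∀ v, v ∈ l := by
  have := Fintype.ofFinite V
  by_contra! h
  have grow : ∀ n, ∃ l, IsClosedWalk B l ∧ l.Nodup ∧ n ≤ l.length := by
    intro n
    induction n with
    | zero =>
      obtain ⟨v⟩ := ‹Nonempty V›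
      exact ⟨[v], ⟨by simp, .singleton v, Or.inl rfl⟩, nodup_singleton v, by simp⟩
    | succ n ih =>
      obtain ⟨l, hl, hnd, hn⟩ := ih
      obtain ⟨w, hw⟩ := h l hl hnd
      obtain ⟨l', hl', hnd', hlt⟩ := hl.exists_longer hT hS hnd hw
      exact ⟨l', hl', hnd', by omega⟩
  obtain ⟨l, -, hnd, hlen⟩ := grow (Fintype.card V + 1)
  have := hnd.length_le_card
  omega

end Tournament

theorem StronglyConnectedOn.reflTransGen_subtype {A : V → V → Prop} {D : Set V}
    (hD : StronglyConnectedOn A D) (u v : D) : ReflTransGen (fun a b : D => A a b) u v := by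
  obtain ⟨u, hu⟩ := u
  have key : ∀ w, ReflTransGen (fun a b => a ∈ D ∧ b ∈ D ∧ A a b) u w →
      ∀ hw : w ∈ D, ReflTransGen (fun a b : D => A a b) ⟨u, hu⟩ ⟨w, hw⟩ := by
    intro w h
    induction h with
    | refl => exact fun _ => .refl
    | tail _ hbc ih => exact fun _ => (ih hbc.1).tail hbc.2.2
  exact key v (hD u hu v v.2) v.2

theorem StronglyConnectedOn.exists_isClosedWalk_nodup [Finite V] {A : V → V → Prop}
    (hT : IsTournament A) {D : Set V} (hD : StronglyConnectedOn A D) (hne : D.Nonempty) :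
    ∃ l, IsClosedWalk A l ∧ l.Nodup ∧ {v | v ∈ l} = D := by
  have : Nonempty D := hne.to_subtype
  obtain ⟨l, hl, hnd, hall⟩ :=
    (hT.comap Subtype.val_injective).exists_hamiltonian_cycle hD.reflTransGen_subtype
  refine ⟨l.map Subtype.val, hl.map fun _ _ h => h, hnd.map Subtype.val_injective, ?_⟩
  ext v
  simp only [Set.mem_ofPred_eq, mem_map]
  exact ⟨fun ⟨a, _, ha⟩ => ha ▸ a.2, fun hv => ⟨⟨v, hv⟩, hall _, rfl⟩⟩

theorem ncard_setOf_mem_le_walkLength {l : List V} (h : 1 < {v | v ∈ l}.ncard) :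
    {v | v ∈ l}.ncard ≤ walkLength l := by
  have := l.ncard_setOf_mem_le_length
  rw [walkLength, if_neg (by omega)]
  exact this

theorem walkLength_le_length (l : List V) : walkLength l ≤ l.length := by
  unfold walkLength
  split_ifs <;> omega

section Domination

variable {A : V → V → Prop}

theorem domNum_le_ncard {S : Set V} (h : Dom A S) : domNum A ≤ S.ncard :=
  Nat.sInf_le ⟨S, rfl, h⟩

theorem watchman_le {l : List V} (h : IsCDW A l) : watchman A ≤ walkLength l :=
  Nat.sInf_le ⟨l, h, rfl⟩

theorem exists_isCDW_walkLength_eq_watchman (h : HasCDW A) :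
    ∃ l, IsCDW A l ∧ walkLength l = watchman A :=
  Nat.sInf_mem (s := {n | ∃ l, IsCDW A l ∧ walkLength l = n})
    (h.elim fun l hl => ⟨_, l, hl, rfl⟩)

theorem hasCDW_of_watchman_ne_zero (h : watchman A ≠ 0) : HasCDW A := by
  obtain ⟨_, l, hl, -⟩ := Nat.nonempty_of_pos_sInf (s := {n | ∃ l, IsCDW A l ∧ walkLength l = n})
    (Nat.pos_of_ne_zero h)
  exact ⟨l, hl⟩

theorem domNum_le_watchman (hγ : 1 < domNum A) (h : HasCDW A) : domNum A ≤ watchman A := by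
  obtain ⟨l, hl, hlen⟩ := exists_isCDW_walkLength_eq_watchman h
  have hγl := domNum_le_ncard hl.2
  have hlw := ncard_setOf_mem_le_walkLength (l := l) (by omega)
  omega

end Domination

theorem stmt15 [Fintype V] (A : V → V → Prop) (hT : IsTournament A)
    (hγ : 1 < domNum A) :
    watchman A = domNum A ↔
      ∃ D : Set V, D.ncard = domNum A ∧ Dom A D ∧ StronglyConnectedOn A D := by
  constructor
  · intro hw
    obtain ⟨l, hl, hlen⟩ :=
      exists_isCDW_walkLength_eq_watchman (hasCDW_of_watchman_ne_zero (A := A) (by omega))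
    have hγl := domNum_le_ncard hl.2
    have hlw := ncard_setOf_mem_le_walkLength (l := l) (by omega)
    exact ⟨{v | v ∈ l}, by omega, hl.2, hl.1.stronglyConnectedOn⟩
  · rintro ⟨D, hD, hdom, hsc⟩
    obtain ⟨l, hl, hnd, rfl⟩ :=
      hsc.exists_isClosedWalk_nodup hT (Set.nonempty_of_ncard_ne_zero (by omega))
    have hcdw : IsCDW A l := ⟨hl, hdom⟩
    have hwl := watchman_le hcdw
    have hll := walkLength_le_length l
    have hlD := hnd.ncard_setOf_mem
    have hγw := domNum_le_watchman hγ ⟨l, hcdw⟩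
    omega
end
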